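/- arXiv:2511.00436 — 2 statements merged into one kernel-verified Lean document; each statement's English description precedes it below -/
import Mathlib

section
/- Suppose every vertex of G has degree at least 2, and define the masked score matrix S^add by S^add_{u,i} = s^user_{u,i} if R_{u,i} = 0 and S^add_{u,i} = 0 if R_{u,i} = 1. Then the support of R is contained in the support of R Rᵀ R, and the number of nonzero entries of S^add equals NNZ(R Rᵀ R) − NNZ(R), where NNZ counts the nonzero entries of a matrix. -/
open Matrix

/-!
Users are the type `U`, items the type `I`, and the bipartite interaction graph `G`
lives on the disjoint union `U ⊕ I`.
-/

/-- The Adamic–Adar score `AA(x,y) = Σ_{k ∈ N(x) ∩ N(y)} 1 / log d(k)`. -/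
noncomputable def adamicAdar {V : Type*} [Fintype V] [DecidableEq V]
    (G : SimpleGraph V) [DecidableRel G.Adj] (x y : V) : ℝ :=
  ∑ k ∈ G.neighborFinset x ∩ G.neighborFinset y, 1 / Real.log (G.degree k : ℝ)

/-- The user-based effectiveness score
`s^user_{u,i} = (1/d(i)) · Σ_{v ∈ N(i)} AA(u,v)`. -/
noncomputable def sUser {U I : Type*} [Fintype U] [Fintype I] [DecidableEq U] [DecidableEq I]
    (G : SimpleGraph (U ⊕ I)) [DecidableRel G.Adj] (u : U) (i : I) : ℝ :=
  (1 / (G.degree (Sum.inr i) : ℝ)) *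
    ∑ v ∈ Finset.univ.filter (fun v : U => G.Adj (Sum.inr i) (Sum.inl v)),
      adamicAdar G (Sum.inl u) (Sum.inl v)

/-- The relation matrix `R ∈ {0,1}^{U×I}` with `R_{u,i} = 1` exactly when `{u,i}`
is an edge of `G`. -/
noncomputable def relMat {U I : Type*} [Fintype U] [Fintype I]
    (G : SimpleGraph (U ⊕ I)) [DecidableRel G.Adj] : Matrix U I ℝ :=
  fun u i => if G.Adj (Sum.inl u) (Sum.inr i) then 1 else 0

/-- The masked score matrix `S^add`: `S^add_{u,i} = s^user_{u,i}` if `R_{u,i} = 0`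
and `S^add_{u,i} = 0` if `R_{u,i} = 1`. -/
noncomputable def sAdd {U I : Type*} [Fintype U] [Fintype I] [DecidableEq U] [DecidableEq I]
    (G : SimpleGraph (U ⊕ I)) [DecidableRel G.Adj] : Matrix U I ℝ :=
  fun u i => if relMat G u i = 0 then sUser G u i else 0

open Classical in
/-- `NNZ M` is the number of nonzero entries of the matrix `M`. -/
noncomputable def NNZ {m n : Type*} [Fintype m] [Fintype n] (M : Matrix m n ℝ) : ℕ :=
  (Finset.univ.filter (fun p : m × n => M p.1 p.2 ≠ 0)).card

/-!
All quantities involved are sums of nonnegative terms, so each is nonzero exactly when one of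
its terms is. Since every degree is at least `2`, each weight `1 / log d(k)` is positive, so
`AA(u, v) ≠ 0` iff `u` and `v` have a common neighbour, which by bipartiteness is an item.
Hence `s^user_{u,i} ≠ 0` iff there is a path `u - j - v - i`, which is exactly the condition
`(R Rᵀ R)_{u,i} ≠ 0`. An edge `u - i` gives such a path `u - i - u - i`, so the support of
`R Rᵀ R` is the disjoint union of the supports of `S^add` and of `R`.
-/

theorem Finset.sum_ne_zero_iff_of_nonneg {ι M : Type*} [AddCommMonoid M] [PartialOrder M]
    [IsOrderedAddMonoid M] {s : Finset ι} {f : ι → M} (hf : ∀ i ∈ s, 0 ≤ f i) :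
    ∑ i ∈ s, f i ≠ 0 ↔ ∃ i ∈ s, f i ≠ 0 := by
  simp [sum_eq_zero_iff_of_nonneg hf]

namespace Matrix

variable {l m n R : Type*} [Fintype m] [Semiring R] [PartialOrder R] [IsOrderedRing R]

theorem mul_apply_nonneg {A : Matrix l m R} {B : Matrix m n R} (hA : ∀ i j, 0 ≤ A i j)
    (hB : ∀ j k, 0 ≤ B j k) (i : l) (k : n) : 0 ≤ (A * B) i k :=
  Finset.sum_nonneg fun j _ => mul_nonneg (hA i j) (hB j k)

theorem mul_apply_ne_zero_iff_of_nonneg [NoZeroDivisors R] {A : Matrix l m R} {B : Matrix m n R}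
    (hA : ∀ i j, 0 ≤ A i j) (hB : ∀ j k, 0 ≤ B j k) (i : l) (k : n) :
    (A * B) i k ≠ 0 ↔ ∃ j, A i j ≠ 0 ∧ B j k ≠ 0 := by
  simp_rw [mul_apply, Finset.sum_ne_zero_iff_of_nonneg fun j _ => mul_nonneg (hA i j) (hB j k),
    Finset.mem_univ, true_and, mul_ne_zero_iff]

end Matrix

theorem NNZ_eq_add_of_support_disjoint_union {m n : Type*} [Fintype m] [Fintype n]
    {A B C : Matrix m n ℝ} (hC : ∀ i j, C i j ≠ 0 ↔ A i j ≠ 0 ∨ B i j ≠ 0)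
    (hAB : ∀ i j, A i j ≠ 0 → B i j = 0) : NNZ C = NNZ A + NNZ B := by
  classical
  unfold NNZ
  rw [← Finset.card_union_of_disjoint, ← Finset.filter_or]
  · simp_rw [hC]
  · exact Finset.disjoint_filter.2 fun p _ hA hB => hB (hAB p.1 p.2 hA)

theorem adamicAdar_nonneg {V : Type*} [Fintype V] [DecidableEq V] (G : SimpleGraph V)
    [DecidableRel G.Adj] (x y : V) : 0 ≤ adamicAdar G x y :=
  Finset.sum_nonneg fun _ _ => one_div_nonneg.2 (Real.log_natCast_nonneg _)

theorem adamicAdar_ne_zero_iff {V : Type*} [Fintype V] [DecidableEq V] (G : SimpleGraph V)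
    [DecidableRel G.Adj] (hdeg : ∀ k, 2 ≤ G.degree k) (x y : V) :
    adamicAdar G x y ≠ 0 ↔ ∃ k, G.Adj x k ∧ G.Adj y k := by
  have hweight : ∀ k, 1 / Real.log (G.degree k : ℝ) ≠ 0 := fun k =>
    one_div_ne_zero (Real.log_pos (by exact_mod_cast hdeg k)).ne'
  rw [adamicAdar, Finset.sum_ne_zero_iff_of_nonneg fun _ _ =>
    one_div_nonneg.2 (Real.log_natCast_nonneg _)]
  simp only [Finset.mem_inter, SimpleGraph.mem_neighborFinset, ne_eq, hweight, not_false_eq_true,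
    and_true]

theorem exists_common_neighbor_inl_iff {U I : Type*} {G : SimpleGraph (U ⊕ I)}
    (hbip : ∀ x y, G.Adj x y → (x.isLeft ∧ y.isRight) ∨ (x.isRight ∧ y.isLeft)) (u v : U) :
    (∃ k, G.Adj (Sum.inl u) k ∧ G.Adj (Sum.inl v) k) ↔
      ∃ j, G.Adj (Sum.inl u) (Sum.inr j) ∧ G.Adj (Sum.inl v) (Sum.inr j) := by
  refine ⟨fun ⟨k, hu, hv⟩ => ?_, fun ⟨j, hu, hv⟩ => ⟨_, hu, hv⟩⟩
  cases k with
  | inl w => simpa using hbip _ _ hu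
  | inr j => exact ⟨j, hu, hv⟩

section Recommendation

variable {U I : Type*} [Fintype U] [Fintype I] (G : SimpleGraph (U ⊕ I)) [DecidableRel G.Adj]

theorem relMat_nonneg (u : U) (i : I) : 0 ≤ relMat G u i := by
  unfold relMat
  split_ifs <;> norm_num

theorem relMat_ne_zero_iff (u : U) (i : I) :
    relMat G u i ≠ 0 ↔ G.Adj (Sum.inl u) (Sum.inr i) := by
  simp [relMat]

theorem relMat_mul_transpose_mul_ne_zero_iff (u : U) (i : I) :
    (relMat G * (relMat G)ᵀ * relMat G) u i ≠ 0 ↔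
      ∃ v j, G.Adj (Sum.inl u) (Sum.inr j) ∧ G.Adj (Sum.inl v) (Sum.inr j) ∧
        G.Adj (Sum.inl v) (Sum.inr i) := by
  have hR : ∀ u i, 0 ≤ relMat G u i := relMat_nonneg G
  have hRt : ∀ i u, 0 ≤ (relMat G)ᵀ i u := fun i u => hR u i
  rw [Matrix.mul_apply_ne_zero_iff_of_nonneg (Matrix.mul_apply_nonneg hR hRt) hR]
  simp only [Matrix.mul_apply_ne_zero_iff_of_nonneg hR hRt, Matrix.transpose_apply,
    relMat_ne_zero_iff]
  grind

theorem relMat_mul_transpose_mul_ne_zero {u : U} {i : I} (h : relMat G u i ≠ 0) :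
    (relMat G * (relMat G)ᵀ * relMat G) u i ≠ 0 := by
  rw [relMat_ne_zero_iff] at h
  exact (relMat_mul_transpose_mul_ne_zero_iff G u i).2 ⟨u, i, h, h, h⟩

variable [DecidableEq U] [DecidableEq I]

theorem sUser_ne_zero_iff
    (hbip : ∀ x y, G.Adj x y → (x.isLeft ∧ y.isRight) ∨ (x.isRight ∧ y.isLeft))
    (hdeg : ∀ x, 2 ≤ G.degree x) (u : U) (i : I) :
    sUser G u i ≠ 0 ↔ (relMat G * (relMat G)ᵀ * relMat G) u i ≠ 0 := by
  have hdeg_i : (1 / (G.degree (Sum.inr i) : ℝ)) ≠ 0 := by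
    have := hdeg (Sum.inr i)
    positivity
  rw [relMat_mul_transpose_mul_ne_zero_iff, sUser, mul_ne_zero_iff, and_iff_right hdeg_i,
    Finset.sum_ne_zero_iff_of_nonneg fun _ _ => adamicAdar_nonneg _ _ _]
  simp only [adamicAdar_ne_zero_iff G hdeg, exists_common_neighbor_inl_iff hbip,
    Finset.mem_filter, Finset.mem_univ, true_and, G.adj_comm (Sum.inr i)]
  grind

theorem sAdd_ne_zero_iff (u : U) (i : I) :
    sAdd G u i ≠ 0 ↔ relMat G u i = 0 ∧ sUser G u i ≠ 0 :=
  ite_ne_right_iff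

end Recommendation

/-- If every vertex has degree at least 2, then the support of `R`
is contained in the support of `R Rᵀ R`, and the number of nonzero entries of
`S^add` equals `NNZ(R Rᵀ R) − NNZ(R)`. -/
theorem nnz_sAdd_eq
    {U I : Type*} [Fintype U] [Fintype I] [DecidableEq U] [DecidableEq I]
    (G : SimpleGraph (U ⊕ I)) [DecidableRel G.Adj]
    (hbip : ∀ x y, G.Adj x y → (x.isLeft ∧ y.isRight) ∨ (x.isRight ∧ y.isLeft))
    (hdeg : ∀ x, 2 ≤ G.degree x) :
    (∀ u : U, ∀ i : I, relMat G u i ≠ 0 →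
      (relMat G * (relMat G)ᵀ * relMat G) u i ≠ 0) ∧
    NNZ (sAdd G) = NNZ (relMat G * (relMat G)ᵀ * relMat G) - NNZ (relMat G) := by
  refine ⟨fun _ _ => relMat_mul_transpose_mul_ne_zero G, ?_⟩
  have hsplit : NNZ (relMat G * (relMat G)ᵀ * relMat G) = NNZ (sAdd G) + NNZ (relMat G) := by
    refine NNZ_eq_add_of_support_disjoint_union (fun u i => ?_)
      (fun u i h => ((sAdd_ne_zero_iff G u i).1 h).1)
    rw [sAdd_ne_zero_iff, sUser_ne_zero_iff G hbip hdeg]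
    by_cases hR : relMat G u i = 0
    · simp [hR]
    · simp [hR, relMat_mul_transpose_mul_ne_zero G hR]
  omega
end

section
/- Suppose every vertex of G has degree at least 2. If u is a user and i is an item such that {u,i} is not an edge of G and the user-based effectiveness score s^user_{u,i} is strictly positive, then u and i are connected in G and their graph distance in G is exactly 3. In other words, every item selected by collaborative edge addition via the user-based score is a 3-hop neighbor of the target user. -/
/-!
A positive score has a positive summand, which exhibits a path `u — k — v — i`, so
`dist(u, i) ≤ 3`. Colouring each vertex by its side of the bipartition is a proper
2-colouring, so every walk from a user to an item has odd length; since `u` and `i`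
are not adjacent, the distance is neither 1 nor 0, hence it is 3.
-/

namespace SimpleGraph

variable {α β : Type*} {G : SimpleGraph (α ⊕ β)}

def sideColoring (hbip : ∀ x y, G.Adj x y → (x.isLeft ∧ y.isRight) ∨ (x.isRight ∧ y.isLeft)) :
    G.Coloring Bool :=
  Coloring.mk Sum.isLeft fun {x y} hxy => by
    rcases hbip x y hxy with ⟨hx, hy⟩ | ⟨hx, hy⟩ <;> cases x <;> cases y <;> simp_all

theorem Walk.odd_length_inl_inr
    (hbip : ∀ x y, G.Adj x y → (x.isLeft ∧ y.isRight) ∨ (x.isRight ∧ y.isLeft))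
    {a : α} {b : β} (p : G.Walk (Sum.inl a) (Sum.inr b)) : Odd p.length := by
  rw [(sideColoring hbip).odd_length_iff_not_congr p]
  exact iff_of_false (not_not_intro rfl) Bool.false_ne_true

theorem Reachable.odd_dist_inl_inr
    (hbip : ∀ x y, G.Adj x y → (x.isLeft ∧ y.isRight) ∨ (x.isRight ∧ y.isLeft))
    {a : α} {b : β} (h : G.Reachable (Sum.inl a) (Sum.inr b)) :
    Odd (G.dist (Sum.inl a) (Sum.inr b)) := by
  obtain ⟨p, hp⟩ := h.exists_walk_length_eq_dist
  exact hp ▸ p.odd_length_inl_inr hbip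

end SimpleGraph

theorem exists_common_neighbor_of_adamicAdar_ne_zero {V : Type*} [Fintype V] [DecidableEq V]
    {G : SimpleGraph V} [DecidableRel G.Adj] {x y : V} (h : adamicAdar G x y ≠ 0) :
    ∃ k, G.Adj x k ∧ G.Adj y k := by
  obtain ⟨k, hk, -⟩ := Finset.exists_ne_zero_of_sum_ne_zero h
  simp only [Finset.mem_inter, SimpleGraph.mem_neighborFinset] at hk
  exact ⟨k, hk⟩

theorem exists_adj_adamicAdar_ne_zero_of_sUser_ne_zero {U I : Type*} [Fintype U] [Fintype I]
    [DecidableEq U] [DecidableEq I] {G : SimpleGraph (U ⊕ I)} [DecidableRel G.Adj]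
    {u : U} {i : I} (h : sUser G u i ≠ 0) :
    ∃ v, G.Adj (Sum.inr i) (Sum.inl v) ∧ adamicAdar G (Sum.inl u) (Sum.inl v) ≠ 0 := by
  obtain ⟨v, hv, hAA⟩ := Finset.exists_ne_zero_of_sum_ne_zero (right_ne_zero_of_mul h)
  simp only [Finset.mem_filter, Finset.mem_univ, true_and] at hv
  exact ⟨v, hv, hAA⟩

theorem dist_eq_three_of_sUser_pos_general
    {U I : Type*} [Fintype U] [Fintype I] [DecidableEq U] [DecidableEq I]
    (G : SimpleGraph (U ⊕ I)) [DecidableRel G.Adj]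
    (hbip : ∀ x y, G.Adj x y → (x.isLeft ∧ y.isRight) ∨ (x.isRight ∧ y.isLeft))
    (u : U) (i : I)
    (hne : ¬ G.Adj (Sum.inl u) (Sum.inr i))
    (hpos : 0 < sUser G u i) :
    G.Reachable (Sum.inl u) (Sum.inr i) ∧ G.dist (Sum.inl u) (Sum.inr i) = 3 := by
  obtain ⟨v, hiv, hAA⟩ := exists_adj_adamicAdar_ne_zero_of_sUser_ne_zero hpos.ne'
  obtain ⟨k, huk, hvk⟩ := exists_common_neighbor_of_adamicAdar_ne_zero hAA
  let w : G.Walk (Sum.inl u) (Sum.inr i) := .cons huk (.cons hvk.symm (.cons hiv.symm .nil))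
  have hreach : G.Reachable (Sum.inl u) (Sum.inr i) := ⟨w⟩
  have hle : G.dist (Sum.inl u) (Sum.inr i) ≤ 3 := SimpleGraph.dist_le w
  have hne_one : G.dist (Sum.inl u) (Sum.inr i) ≠ 1 :=
    fun h => hne (SimpleGraph.dist_eq_one_iff_adj.mp h)
  obtain ⟨m, hodd⟩ := hreach.odd_dist_inl_inr hbip
  exact ⟨hreach, by omega⟩

/-- If every vertex has degree at least 2, `{u,i}` is not an edge of
`G`, and `s^user_{u,i} > 0`, then `u` and `i` are connected in `G` and their graph
distance in `G` is exactly 3. -/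
theorem dist_eq_three_of_sUser_pos
    {U I : Type*} [Fintype U] [Fintype I] [DecidableEq U] [DecidableEq I]
    (G : SimpleGraph (U ⊕ I)) [DecidableRel G.Adj]
    (hbip : ∀ x y, G.Adj x y → (x.isLeft ∧ y.isRight) ∨ (x.isRight ∧ y.isLeft))
    (hdeg : ∀ x, 2 ≤ G.degree x)
    (u : U) (i : I)
    (hne : ¬ G.Adj (Sum.inl u) (Sum.inr i))
    (hpos : 0 < sUser G u i) :
    G.Reachable (Sum.inl u) (Sum.inr i) ∧ G.dist (Sum.inl u) (Sum.inr i) = 3 :=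
  dist_eq_three_of_sUser_pos_general G hbip u i hne hpos
end
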